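/- Let f ∈ L^1(ℝ^n) be log-concave, non-zero, and with compact support. Then for every u in the unit sphere S^{n−1}: lim_{α→∞} ρ_{R_α f}(u) = sup_{0 < r < ‖f‖_∞} ρ_{D{f≥r}}(u) = ρ_{D supp(f)}(u), where D E = E − E = {x − y : x, y ∈ E} is the difference body and supp(f) is the support of f. -/

import Mathlib

open MeasureTheory Metric Set Pointwise Filter
open scoped ENNReal Topology

noncomputable section

abbrev Euc (n : ℕ) := EuclideanSpace ℝ (Fin n)

/-- `f : ℝⁿ → [0,∞)` is log-concave: `f(ax+by) ≥ f(x)^a f(y)^b` for convex combinations. -/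
def LogConcave {n : ℕ} (f : Euc n → ℝ) : Prop :=
  ∀ x y : Euc n, ∀ a b : ℝ, 0 ≤ a → 0 ≤ b → a + b = 1 →
    f x ^ a * f y ^ b ≤ f (a • x + b • y)

/-- The essential supremum norm `‖f‖_∞`. -/
noncomputable def supNorm (n : ℕ) (f : Euc n → ℝ) : ℝ :=
  (eLpNorm f ⊤ volume).toReal

/-- Radial function of a set: `ρ_K(u) = sup {t ≥ 0 : t u ∈ K}`. -/
noncomputable def radialFn (n : ℕ) (K : Set (Euc n)) (u : Euc n) : ℝ :=
  sSup {t : ℝ | 0 ≤ t ∧ t • u ∈ K}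

/-- `ρ_{R_α f}(u) = ((α/‖f‖₁) ∫_0^∞ t^{α-1} ∫ min{f(x),f(x+tu)} dx dt)^{1/α}` for `α > 0`. -/
noncomputable def rhoR (n : ℕ) (α : ℝ) (f : Euc n → ℝ) (u : Euc n) : ℝ :=
  ((α / ∫ x, f x) *
    ∫ t in Set.Ioi (0 : ℝ), t ^ (α - 1) * ∫ x, min (f x) (f (x + t • u))) ^ (1 / α)

section Aux
variable {n : ℕ} {f : Euc n → ℝ}

/-- Key combination lemma for log-concave functions. -/
lemma logConcave_min_le (hlc : LogConcave f)
    {x y : Euc n} {a b m : ℝ} (ha : 0 ≤ a) (hb : 0 ≤ b) (hab : a + b = 1)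
    (hm : 0 ≤ m) (hx : m ≤ f x) (hy : m ≤ f y) : m ≤ f (a • x + b • y) := by
  have h1 : m ^ a * m ^ b ≤ f x ^ a * f y ^ b :=
    mul_le_mul (Real.rpow_le_rpow hm hx ha) (Real.rpow_le_rpow hm hy hb)
      (Real.rpow_nonneg hm b) (Real.rpow_nonneg (hm.trans hx) a)
  have h2 : m ^ a * m ^ b = m := by
    rw [← Real.rpow_add' hm (by rw [hab]; norm_num), hab, Real.rpow_one]
  calc m = m ^ a * m ^ b := h2.symm
    _ ≤ f x ^ a * f y ^ b := h1
    _ ≤ f (a • x + b • y) := hlc x y a b ha hb hab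

lemma superlevel_convex (hlc : LogConcave f) {r : ℝ} (hr : 0 ≤ r) :
    Convex ℝ {x | r ≤ f x} := by
  intro x hx y hy a b ha hb hab
  exact logConcave_min_le hlc ha hb hab hr hx hy

lemma support_convex (hlc : LogConcave f) (hf0 : ∀ x, 0 ≤ f x) :
    Convex ℝ (Function.support f) := by
  intro x hx y hy a b ha hb hab
  have hx' : 0 < f x := lt_of_le_of_ne (hf0 x) (Ne.symm hx)
  have hy' : 0 < f y := lt_of_le_of_ne (hf0 y) (Ne.symm hy)
  have := logConcave_min_le hlc ha hb hab (le_min hx'.le hy'.le) (min_le_left _ _)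
    (min_le_right _ _)
  simp only [Function.mem_support]
  exact ne_of_gt (lt_of_lt_of_le (lt_min hx' hy') this)

/-- A convex set of positive measure contains a ball. -/
lemma convex_pos_measure_ball {s : Set (Euc n)} (hs : Convex ℝ s)
    (hpos : volume s ≠ 0) : ∃ p : Euc n, ∃ r : ℝ, 0 < r ∧ ball p r ⊆ s := by
  have hint : (interior s).Nonempty := by
    by_contra h
    rw [Set.not_nonempty_iff_eq_empty] at h
    have hspan : affineSpan ℝ s ≠ ⊤ := by
      intro htop
      rw [← hs.interior_nonempty_iff_affineSpan_eq_top] at htop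
      exact htop.ne_empty h
    exact hpos (measure_mono_null (subset_affineSpan ℝ s)
      (MeasureTheory.Measure.addHaar_affineSubspace volume _ hspan))
  obtain ⟨p, hp⟩ := hint
  rw [mem_interior_iff_mem_nhds, Metric.mem_nhds_iff] at hp
  obtain ⟨r, hr, hball⟩ := hp
  exact ⟨p, r, hr, hball⟩

end Aux

set_option maxHeartbeats 2000000 in
/-- For compactly supported, log-concave `f ∈ L¹`, the radial functions of `R_α f` converge,
as `α → ∞`, to the radial function of the difference body of the support, which is also the
supremum of the radial functions of the difference bodies of the superlevel sets. -/
theorem rhoR_tendsto_difference_body (n : ℕ) (hn : 1 ≤ n) (f : Euc n → ℝ)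
    (hf0 : ∀ x, 0 ≤ f x) (hfm : Measurable f) (hfi : Integrable f)
    (hne : ¬ f =ᵐ[volume] 0) (hlc : LogConcave f) (hcs : HasCompactSupport f) :
    ∀ u : Euc n, ‖u‖ = 1 →
      Tendsto (fun α : ℝ => rhoR n α f u) atTop
          (𝓝 (radialFn n (Function.support f - Function.support f) u)) ∧
        radialFn n (Function.support f - Function.support f) u =
          sSup ((fun r => radialFn n ({x | r ≤ f x} - {x | r ≤ f x}) u) ''
            Set.Ioo 0 (supNorm n f)) := by
  intro u hu
  haveI : Nontrivial (Euc n) :=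
    Module.nontrivial_of_finrank_pos (R := ℝ)
      (by rw [finrank_euclideanSpace_fin]; omega)
  set C : Set (Euc n) := Function.support f with hCdef
  -- positive measure of the support
  have hCpos : volume C ≠ 0 := by
    intro h
    apply hne
    rw [Filter.EventuallyEq, ae_iff]
    simpa [hCdef, Function.support] using h
  have hfpos : ∀ x, x ∈ C → 0 < f x := fun x hx => lt_of_le_of_ne (hf0 x) (Ne.symm hx)
  -- a ball on which f is bounded below
  have hδex : ∃ δ : ℝ, 0 < δ ∧ volume {x | δ ≤ f x} ≠ 0 := by
    by_contra h
    push_neg at h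
    apply hCpos
    refine measure_mono_null (fun x hx => ?_) (measure_iUnion_null
      (fun k : ℕ => h (1 / (k + 1)) (by positivity)))
    have hx' : 0 < f x := hfpos x hx
    obtain ⟨k, hk⟩ := exists_nat_one_div_lt hx'
    exact Set.mem_iUnion.2 ⟨k, le_of_lt hk⟩
  obtain ⟨δ, hδpos, hδvol⟩ := hδex
  obtain ⟨p, rb, hrb, hball⟩ :=
    convex_pos_measure_ball (superlevel_convex hlc hδpos.le) hδvol
  have hballf : ∀ z ∈ ball p rb, δ ≤ f z := fun z hz => hball hz
  have hballC : ball p rb ⊆ C := fun z hz => by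
    simp only [hCdef, Function.mem_support]
    exact ne_of_gt (lt_of_lt_of_le hδpos (hballf z hz))
  -- boundedness of the support
  obtain ⟨R, hR, hCR⟩ : ∃ R : ℝ, 0 < R ∧ C ⊆ ball 0 R := by
    obtain ⟨R, hR, h⟩ := (hcs.isBounded).subset_ball_lt 0 0
    exact ⟨R, hR, (subset_tsupport f).trans h⟩
  -- the set S and ρ
  set S : Set ℝ := {t : ℝ | 0 ≤ t ∧ t • u ∈ C - C} with hSdef
  have hbddval : ∀ K : Set (Euc n), K ⊆ C → ∀ t : ℝ, 0 ≤ t → t • u ∈ K - K → t ≤ 2 * R := by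
    intro K hK t ht htu
    obtain ⟨x, hx, y, hy, hxy⟩ := htu
    have hx' : ‖x‖ < R := mem_ball_zero_iff.1 (hCR (hK hx))
    have hy' : ‖y‖ < R := mem_ball_zero_iff.1 (hCR (hK hy))
    have : ‖t • u‖ ≤ ‖x‖ + ‖y‖ := by rw [← hxy]; exact norm_sub_le x y
    rw [norm_smul, hu, mul_one, Real.norm_eq_abs, abs_of_nonneg ht] at this
    linarith
  have hSbdd : BddAbove S :=
    ⟨2 * R, fun t ht => hbddval C (fun z hz => hz) t ht.1 ht.2⟩
  have hS0 : (0 : ℝ) ∈ S := by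
    refine ⟨le_refl 0, ?_⟩
    rw [zero_smul, ← sub_self p]
    exact Set.sub_mem_sub (hballC (mem_ball_self hrb)) (hballC (mem_ball_self hrb))
  have hSne : S.Nonempty := ⟨0, hS0⟩
  set ρ : ℝ := radialFn n (C - C) u with hρdef
  have hρS : ρ = sSup S := rfl
  have hS_small : ∀ t : ℝ, 0 ≤ t → t < rb → t ∈ S := by
    intro t ht htrb
    refine ⟨ht, ?_⟩
    have h1 : p + t • u ∈ ball p rb := by
      rw [mem_ball, dist_eq_norm, add_sub_cancel_left, norm_smul, hu, mul_one,
        Real.norm_eq_abs, abs_of_nonneg ht]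
      exact htrb
    have := Set.sub_mem_sub (hballC h1) (hballC (mem_ball_self hrb))
    rwa [add_sub_cancel_left] at this
  have hρpos : 0 < ρ := by
    have h1 : rb / 2 ∈ S := hS_small _ (by positivity) (by linarith)
    have h2 := le_csSup hSbdd h1
    rw [hρS]
    linarith
  -- the function g
  set g : ℝ → ℝ := fun t => ∫ x, min (f x) (f (x + t • u)) with hgdef
  have hgm : Measurable g := by
    have hF : StronglyMeasurable
        (fun q : ℝ × Euc n => min (f q.2) (f (q.2 + q.1 • u))) := by
      apply Measurable.stronglyMeasurable
      exact (hfm.comp measurable_snd).min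
        (hfm.comp (measurable_snd.add (measurable_fst.smul_const u)))
    exact (hF.integral_prod_right').measurable
  have hg_int : ∀ t : ℝ, Integrable (fun x => min (f x) (f (x + t • u))) := by
    intro t
    have hm : Measurable (fun x => min (f x) (f (x + t • u))) :=
      hfm.min (hfm.comp (measurable_id.add_const (t • u)))
    refine hfi.mono hm.aestronglyMeasurable (Filter.Eventually.of_forall fun x => ?_)
    have h0 : 0 ≤ min (f x) (f (x + t • u)) := le_min (hf0 x) (hf0 _)
    rw [Real.norm_eq_abs, Real.norm_eq_abs, abs_of_nonneg h0, abs_of_nonneg (hf0 x)]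
    exact min_le_left _ _
  have hg_nonneg : ∀ t, 0 ≤ g t := fun t =>
    integral_nonneg (fun x => le_min (hf0 x) (hf0 _))
  set I : ℝ := ∫ x, f x with hIdef
  have hI : 0 < I := by
    rw [hIdef, integral_pos_iff_support_of_nonneg hf0 hfi]
    exact hCpos.bot_lt
  have hg_le : ∀ t, g t ≤ I := fun t =>
    integral_mono (hg_int t) hfi (fun x => min_le_left _ _)
  -- g vanishes above ρ
  have hg0 : ∀ t : ℝ, ρ < t → g t = 0 := by
    intro t ht
    have htnn : 0 ≤ t := le_trans hρpos.le ht.le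
    have htS : t ∉ S := fun h => absurd (le_csSup hSbdd h) (not_le.2 (hρS ▸ ht))
    have hz : ∀ x : Euc n, min (f x) (f (x + t • u)) = 0 := by
      intro x
      rcases eq_or_ne (f x) 0 with h | h
      · rw [min_eq_left (h ▸ hf0 _), h]
      rcases eq_or_ne (f (x + t • u)) 0 with h2 | h2
      · rw [min_eq_right (h2 ▸ hf0 _), h2]
      exact absurd ⟨htnn, ⟨x + t • u, h2, x, h, add_sub_cancel_left x (t • u)⟩⟩ htS
    rw [hgdef]
    simp only [hz, integral_zero]
  -- integrand a.e.-measurability and integrability on Ioi 0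
  have hmeas : ∀ α : ℝ, ∀ s : Set ℝ, s ⊆ Set.Ioi (0:ℝ) → MeasurableSet s →
      AEStronglyMeasurable (fun t : ℝ => t ^ (α - 1) * g t) (volume.restrict s) := by
    intro α s hs hsm
    have h1 : ContinuousOn (fun t : ℝ => t ^ (α - 1)) s :=
      ContinuousOn.rpow_const continuousOn_id (fun x hx => Or.inl (ne_of_gt (hs hx)))
    exact (h1.aestronglyMeasurable hsm).mul (hgm.aestronglyMeasurable.restrict)
  have h_int : ∀ α : ℝ, 0 < α → IntegrableOn (fun t : ℝ => t ^ (α - 1) * g t) (Ioi 0) := by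
    intro α hα
    have h1 : IntegrableOn (fun t : ℝ => t ^ (α - 1) * g t) (Ioc 0 ρ) := by
      have hdom : IntegrableOn (fun t : ℝ => t ^ (α - 1) * I) (Ioc 0 ρ) := by
        have := (intervalIntegral.intervalIntegrable_rpow'
          (a := 0) (b := ρ) (r := α - 1) (by linarith)).mul_const I
        rwa [intervalIntegrable_iff_integrableOn_Ioc_of_le hρpos.le] at this
      refine Integrable.mono hdom (hmeas α _ Set.Ioc_subset_Ioi_self measurableSet_Ioc) ?_
      filter_upwards [ae_restrict_mem measurableSet_Ioc] with t htmem
      have ht : 0 < t := htmem.1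
      rw [Real.norm_eq_abs, Real.norm_eq_abs,
        abs_of_nonneg (mul_nonneg (Real.rpow_nonneg ht.le _) (hg_nonneg t)),
        abs_of_nonneg (mul_nonneg (Real.rpow_nonneg ht.le _) hI.le)]
      exact mul_le_mul_of_nonneg_left (hg_le t) (Real.rpow_nonneg ht.le _)
    have h2 : IntegrableOn (fun t : ℝ => t ^ (α - 1) * g t) (Ioi ρ) := by
      refine (integrable_zero _ _ _).congr ?_
      filter_upwards [ae_restrict_mem measurableSet_Ioi] with t htmem
      rw [hg0 t htmem, mul_zero, Pi.zero_apply]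
    have h3 := h1.union h2
    rwa [Set.Ioc_union_Ioi_eq_Ioi hρpos.le] at h3
  set J : ℝ → ℝ := fun α => ∫ t in Set.Ioi (0 : ℝ), t ^ (α - 1) * g t with hJdef
  have hJα : ∀ α : ℝ, J α = ∫ t in Set.Ioi (0 : ℝ), t ^ (α - 1) * g t := fun _ => rfl
  have hrhoR : ∀ α : ℝ, rhoR n α f u = ((α / I) * J α) ^ (1 / α) := fun α => rfl
  have hJ_nonneg : ∀ α : ℝ, 0 ≤ J α := by
    intro α
    rw [hJα]
    refine setIntegral_nonneg measurableSet_Ioi fun t ht => ?_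
    exact mul_nonneg (Real.rpow_nonneg (le_of_lt ht) _) (hg_nonneg t)
  -- upper bound
  have h_upper : ∀ α : ℝ, 0 < α → rhoR n α f u ≤ ρ := by
    intro α hα
    have hint1 : IntegrableOn (fun t : ℝ => t ^ (α - 1) * g t) (Ioc 0 ρ) :=
      (h_int α hα).mono_set Set.Ioc_subset_Ioi_self
    have hint2 : IntegrableOn (fun t : ℝ => t ^ (α - 1) * g t) (Ioi ρ) :=
      (h_int α hα).mono_set (Set.Ioi_subset_Ioi hρpos.le)
    have hsplit : J α = ∫ t in Set.Ioc 0 ρ, t ^ (α - 1) * g t := by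
      rw [hJα]
      have hzero : ∫ t in Set.Ioi ρ, t ^ (α - 1) * g t = 0 :=
        setIntegral_eq_zero_of_forall_eq_zero fun t ht => by rw [hg0 t ht, mul_zero]
      rw [← Set.Ioc_union_Ioi_eq_Ioi hρpos.le,
        setIntegral_union (Set.Ioc_disjoint_Ioi le_rfl) measurableSet_Ioi hint1 hint2,
        hzero, add_zero]
    have hint3 : IntegrableOn (fun t : ℝ => t ^ (α - 1) * I) (Ioc 0 ρ) := by
      have := (intervalIntegral.intervalIntegrable_rpow'
        (a := 0) (b := ρ) (r := α - 1) (by linarith)).mul_const I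
      rwa [intervalIntegrable_iff_integrableOn_Ioc_of_le hρpos.le] at this
    have hJle : J α ≤ I * ρ ^ α / α := by
      rw [hsplit]
      have h1 : ∫ t in Set.Ioc 0 ρ, t ^ (α - 1) * g t ≤ ∫ t in Set.Ioc 0 ρ, t ^ (α - 1) * I := by
        refine setIntegral_mono_on hint1 hint3 measurableSet_Ioc fun t ht => ?_
        exact mul_le_mul_of_nonneg_left (hg_le t) (Real.rpow_nonneg ht.1.le _)
      have h2 : ∫ t in Set.Ioc 0 ρ, t ^ (α - 1) * I = I * ρ ^ α / α := by
        rw [MeasureTheory.integral_mul_const, ← intervalIntegral.integral_of_le hρpos.le,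
          integral_rpow (Or.inl (by linarith)),
          Real.zero_rpow (by intro h0; simp at h0; linarith : α - 1 + 1 ≠ 0)]
        have hα1 : α - 1 + 1 = α := by ring
        rw [hα1]
        ring
      linarith
    rw [hrhoR]
    have hbase : (α / I) * J α ≤ ρ ^ α := by
      have h3 := mul_le_mul_of_nonneg_left hJle (le_of_lt (div_pos hα hI))
      calc (α / I) * J α ≤ (α / I) * (I * ρ ^ α / α) := h3
        _ = ρ ^ α := by field_simp
    have h0 : 0 ≤ (α / I) * J α := mul_nonneg (div_nonneg hα.le hI.le) (hJ_nonneg α)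
    calc ((α / I) * J α) ^ (1 / α) ≤ (ρ ^ α) ^ (1 / α) :=
          Real.rpow_le_rpow h0 hbase (by positivity)
      _ = ρ := by
          rw [← Real.rpow_mul hρpos.le, mul_one_div_cancel (ne_of_gt hα), Real.rpow_one]
  constructor
  · -- the limit statement
    rw [Metric.tendsto_atTop]
    intro ε hε
    set ε' : ℝ := min ε (ρ / 2) with hε'def
    have hε'pos : 0 < ε' := lt_min hε (by positivity)
    have hε'le : ε' ≤ ε := min_le_left _ _
    have hε'ρ : ε' ≤ ρ / 2 := min_le_right _ _
    -- find t1
    obtain ⟨t1, ht1S, ht1⟩ : ∃ t1 ∈ S, ρ - ε' / 2 < t1 :=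
      exists_lt_of_lt_csSup hSne (by rw [← hρS]; linarith)
    have ht1pos : 0 < t1 := by linarith
    obtain ⟨htt1, x1, hx1, y1, hy1, hxy1⟩ := ht1S
    -- choose lambda
    set lam : ℝ := min (1 / 2) (ε' / (2 * (t1 + 1))) with hlamdef
    have hlampos : 0 < lam := lt_min (by norm_num) (by positivity)
    have hlamle : lam ≤ 1 / 2 := min_le_left _ _
    have hlamt1 : lam * t1 < ε' / 2 := by
      have h1 : lam ≤ ε' / (2 * (t1 + 1)) := min_le_right _ _
      have h2 : lam * t1 ≤ ε' / (2 * (t1 + 1)) * t1 :=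
        mul_le_mul_of_nonneg_right h1 ht1pos.le
      have h3 : ε' / (2 * (t1 + 1)) * t1 < ε' / 2 := by
        rw [div_mul_eq_mul_div, div_lt_div_iff₀ (by positivity) (by norm_num)]
        nlinarith
      linarith
    set t2 : ℝ := (1 - lam) * t1 with ht2def
    have ht2pos : 0 < t2 := mul_pos (by linarith) ht1pos
    have ht2lb : ρ - ε' < t2 := by
      have h4 : t2 = t1 - lam * t1 := by rw [ht2def]; ring
      rw [h4]
      linarith
    -- the key pointwise lower bound
    have hkey : ∀ w : Euc n, ∀ z ∈ ball ((1 - lam) • w + lam • p) (lam * rb),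
        min (f w) δ ≤ f z := by
      intro w z hz
      have hp'ball : p + lam⁻¹ • (z - ((1 - lam) • w + lam • p)) ∈ ball p rb := by
        rw [mem_ball, dist_eq_norm, add_sub_cancel_left, norm_smul,
          Real.norm_eq_abs, abs_of_pos (inv_pos.2 hlampos)]
        have hz' : ‖z - ((1 - lam) • w + lam • p)‖ < lam * rb := by
          rw [← dist_eq_norm]; exact hz
        calc lam⁻¹ * ‖z - ((1 - lam) • w + lam • p)‖ < lam⁻¹ * (lam * rb) :=
              mul_lt_mul_of_pos_left hz' (inv_pos.2 hlampos)
          _ = rb := by field_simp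
      have hzeq : (1 - lam) • w + lam • (p + lam⁻¹ • (z - ((1 - lam) • w + lam • p))) = z := by
        rw [smul_add, smul_smul, mul_inv_cancel₀ (ne_of_gt hlampos), one_smul]
        abel
      calc min (f w) δ
          ≤ f ((1 - lam) • w + lam • (p + lam⁻¹ • (z - ((1 - lam) • w + lam • p)))) := by
            refine logConcave_min_le hlc (by linarith) hlampos.le (by ring)
              (le_min (hf0 w) hδpos.le) (min_le_left _ _) ?_
            exact le_trans (min_le_right _ _) (hballf _ hp'ball)
        _ = f z := by rw [hzeq]
    set cx : Euc n := (1 - lam) • x1 + lam • p with hcxdef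
    set cy : Euc n := (1 - lam) • y1 + lam • p with hcydef
    have hcxy : cx = cy + t2 • u := by
      rw [hcxdef, hcydef, ht2def, ← smul_smul, ← hxy1, smul_sub]
      abel
    set c : ℝ := min (min (f x1) δ) (min (f y1) δ) with hcdef
    have hcpos : 0 < c := by
      have h1 : 0 < f x1 := lt_of_le_of_ne (hf0 x1) (Ne.symm hx1)
      have h2 : 0 < f y1 := lt_of_le_of_ne (hf0 y1) (Ne.symm hy1)
      exact lt_min (lt_min h1 hδpos) (lt_min h2 hδpos)
    set η : ℝ := lam * rb / 4 with hηdef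
    have hηpos : 0 < η := by rw [hηdef]; positivity
    set a : ℝ := max (t2 - η) (t2 / 2) with hadef
    set b : ℝ := t2 with hbdef
    have hapos : 0 < a := lt_of_lt_of_le (by positivity) (le_max_right _ _)
    have hab : a < b := max_lt (by rw [hbdef]; linarith) (by rw [hbdef]; linarith)
    -- lower bound for g on [a, b]
    set c' : ℝ := c * (volume (ball cy η)).toReal with hc'def
    have hvol_pos : 0 < (volume (ball cy η)).toReal :=
      ENNReal.toReal_pos (ne_of_gt (measure_ball_pos volume cy hηpos))
        measure_ball_lt_top.ne
    have hc'pos : 0 < c' := mul_pos hcpos hvol_pos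
    have hglb : ∀ t ∈ Set.Icc a b, c' ≤ g t := by
      intro t ht
      have htlb : t2 - η ≤ t := le_trans (le_max_left _ _) ht.1
      have htub : t ≤ t2 := ht.2
      have hmin : ∀ w ∈ ball cy η, c ≤ min (f w) (f (w + t • u)) := by
        intro w hw
        have hwball : w ∈ ball cy (lam * rb) :=
          ball_subset_ball (by rw [hηdef]; nlinarith [mul_pos hlampos hrb]) hw
        have h1 : c ≤ f w :=
          le_trans (min_le_right _ _) (hkey y1 w hwball)
        have hxcx : w + t • u ∈ ball cx (lam * rb) := by
          rw [mem_ball, dist_eq_norm, hcxy]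
          have heq : w + t • u - (cy + t2 • u) = (w - cy) + (t - t2) • u := by
            rw [sub_smul]; abel
          rw [heq]
          have h3 : ‖(t - t2) • u‖ ≤ η := by
            rw [norm_smul, hu, mul_one, Real.norm_eq_abs, abs_le]
            constructor <;> linarith
          have h4 : ‖w - cy‖ < η := by rw [← dist_eq_norm]; exact hw
          calc ‖(w - cy) + (t - t2) • u‖ ≤ ‖w - cy‖ + ‖(t - t2) • u‖ := norm_add_le _ _
            _ < η + η := by linarith
            _ ≤ lam * rb := by rw [hηdef]; nlinarith [mul_pos hlampos hrb]
        have h2 : c ≤ f (w + t • u) :=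
          le_trans (min_le_left _ _) (hkey x1 (w + t • u) hxcx)
        exact le_min h1 h2
      have hstep1 : ∫ x in ball cy η, min (f x) (f (x + t • u)) ≤ g t :=
        setIntegral_le_integral (hg_int t)
          (Filter.Eventually.of_forall fun x => le_min (hf0 x) (hf0 _))
      have hstep2 : c * (volume (ball cy η)).toReal
          ≤ ∫ x in ball cy η, min (f x) (f (x + t • u)) :=
        setIntegral_ge_of_const_le_real measurableSet_ball measure_ball_lt_top.ne hmin
          ((hg_int t).integrableOn)
      rw [hc'def]
      linarith
    -- lower bound for the integral
    have hIoc_sub : Set.Ioc a b ⊆ Set.Ioi (0:ℝ) := fun t ht => lt_trans hapos ht.1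
    have hlow : ∀ α : ℝ, 0 < α → (c' / I) * (b ^ α - a ^ α) ≤ (α / I) * J α := by
      intro α hα
      have hmono : ∫ t in Set.Ioc a b, t ^ (α - 1) * g t ≤ J α := by
        rw [hJα α]
        refine setIntegral_mono_set (h_int α hα) ?_
          (HasSubset.Subset.eventuallyLE hIoc_sub)
        filter_upwards [ae_restrict_mem measurableSet_Ioi] with t ht
        exact mul_nonneg (Real.rpow_nonneg (le_of_lt ht) _) (hg_nonneg t)
      have hconstint : IntegrableOn (fun t : ℝ => t ^ (α - 1) * c') (Ioc a b) := by
        have := (intervalIntegral.intervalIntegrable_rpow'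
          (a := a) (b := b) (r := α - 1) (by linarith)).mul_const c'
        rwa [intervalIntegrable_iff_integrableOn_Ioc_of_le hab.le] at this
      have hgint : IntegrableOn (fun t : ℝ => t ^ (α - 1) * g t) (Ioc a b) :=
        (h_int α hα).mono_set hIoc_sub
      have hmono2 : ∫ t in Set.Ioc a b, t ^ (α - 1) * c'
          ≤ ∫ t in Set.Ioc a b, t ^ (α - 1) * g t := by
        refine setIntegral_mono_on hconstint hgint measurableSet_Ioc fun t ht => ?_
        exact mul_le_mul_of_nonneg_left (hglb t ⟨ht.1.le, ht.2⟩)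
          (Real.rpow_nonneg (lt_trans hapos ht.1).le _)
      have hcalc : ∫ t in Set.Ioc a b, t ^ (α - 1) * c' = (b ^ α - a ^ α) / α * c' := by
        rw [MeasureTheory.integral_mul_const, ← intervalIntegral.integral_of_le hab.le,
          integral_rpow (Or.inl (by linarith))]
        have hα1 : α - 1 + 1 = α := by ring
        rw [hα1]
      have h5 : (b ^ α - a ^ α) / α * c' ≤ J α := by
        rw [← hcalc]; exact le_trans hmono2 hmono
      calc (c' / I) * (b ^ α - a ^ α) = (α / I) * ((b ^ α - a ^ α) / α * c') := by
            field_simp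
        _ ≤ (α / I) * J α := mul_le_mul_of_nonneg_left h5 (div_nonneg hα.le hI.le)
    -- eventual strict lower bound
    have hb2 : (0:ℝ) < b := ht2pos
    have hbain : a / b < 1 := (div_lt_one hb2).2 hab
    have hq : (ρ - ε') / b < 1 := (div_lt_one hb2).2 ht2lb
    have hqnn : 0 ≤ ρ - ε' := by linarith
    have htend : Tendsto (fun α : ℝ => (c' / I) * (1 - (a / b) ^ α) - ((ρ - ε') / b) ^ α)
        atTop (𝓝 ((c' / I) * (1 - 0) - 0)) := by
      have h1 := tendsto_rpow_atTop_of_base_lt_one (a / b)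
        (lt_of_lt_of_le (by norm_num : (-1:ℝ) < 0) (by positivity : (0:ℝ) ≤ a / b)) hbain
      have h2 := tendsto_rpow_atTop_of_base_lt_one ((ρ - ε') / b)
        (lt_of_lt_of_le (by norm_num : (-1:ℝ) < 0) (by positivity : (0:ℝ) ≤ (ρ - ε') / b)) hq
      exact (tendsto_const_nhds.mul (tendsto_const_nhds.sub h1)).sub h2
    have hpos_lim : (0:ℝ) < (c' / I) * (1 - 0) - 0 := by
      have := div_pos hc'pos hI
      simpa using this
    have hev : ∀ᶠ α : ℝ in atTop,
        0 < (c' / I) * (1 - (a / b) ^ α) - ((ρ - ε') / b) ^ α :=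
      htend.eventually (eventually_gt_nhds hpos_lim)
    have hfinal : ∀ᶠ α : ℝ in atTop, dist (rhoR n α f u) ρ < ε := by
      filter_upwards [hev, eventually_ge_atTop (1:ℝ)] with α hα1 hα2
      have hα : (0:ℝ) < α := by linarith
      have hbpow : (0:ℝ) < b ^ α := Real.rpow_pos_of_pos hb2 α
      have e1 : (a / b) ^ α * b ^ α = a ^ α := by
        rw [← Real.mul_rpow (by positivity) hb2.le, div_mul_cancel₀ _ (ne_of_gt hb2)]
      have e2 : ((ρ - ε') / b) ^ α * b ^ α = (ρ - ε') ^ α := by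
        rw [← Real.mul_rpow (by positivity) hb2.le, div_mul_cancel₀ _ (ne_of_gt hb2)]
      have hexp : ((c' / I) * (1 - (a / b) ^ α) - ((ρ - ε') / b) ^ α) * b ^ α
          = (c' / I) * (b ^ α - (a / b) ^ α * b ^ α) - ((ρ - ε') / b) ^ α * b ^ α := by
        ring
      rw [e1, e2] at hexp
      have hprod := mul_pos hα1 hbpow
      rw [hexp] at hprod
      have hstrict : (ρ - ε') ^ α < (c' / I) * (b ^ α - a ^ α) := by linarith
      have hle2 : (ρ - ε') ^ α < (α / I) * J α := lt_of_lt_of_le hstrict (hlow α hα)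
      have hrlt : ρ - ε' < rhoR n α f u := by
        have h6 := Real.rpow_lt_rpow (Real.rpow_nonneg hqnn α) hle2
          (by positivity : (0:ℝ) < 1 / α)
        rw [← Real.rpow_mul hqnn, mul_one_div_cancel (ne_of_gt hα), Real.rpow_one] at h6
        rw [hrhoR α]
        exact h6
      have hub := h_upper α hα
      rw [Real.dist_eq, abs_lt]
      constructor
      · linarith
      · linarith
    obtain ⟨N, hN⟩ := eventually_atTop.1 hfinal
    exact ⟨N, hN⟩
  · -- the sSup statement
    have hMeq : supNorm n f = (eLpNorm f ⊤ volume).toReal := rfl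
    -- volume of translated balls is constant
    have hvol_eq : ∀ cq : Euc n,
        volume (ball cq (rb / 2)) = volume (ball (0 : Euc n) (rb / 2)) := by
      intro cq
      rw [Measure.addHaar_ball _ _ (by positivity : (0:ℝ) ≤ rb / 2),
        Measure.addHaar_ball _ _ (by positivity : (0:ℝ) ≤ rb / 2)]
    set vB : ℝ := (volume (ball (0 : Euc n) (rb / 2))).toReal with hvBdef
    have hvB : 0 < vB :=
      ENNReal.toReal_pos (ne_of_gt (measure_ball_pos volume _ (by positivity)))
        measure_ball_lt_top.ne
    set Kb : ℝ := (I / (δ ^ ((1:ℝ)/2) * vB)) ^ 2 with hKbdef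
    -- pointwise bound on f
    have hbound : ∀ q : Euc n, f q ≤ max δ Kb := by
      intro q
      rcases le_or_gt (f q) δ with h | h
      · exact le_trans h (le_max_left _ _)
      have hfq : 0 < f q := lt_trans hδpos h
      have hcq : ∀ z ∈ ball ((2⁻¹ : ℝ) • q + (2⁻¹ : ℝ) • p) (rb / 2),
          f q ^ ((1:ℝ)/2) * δ ^ ((1:ℝ)/2) ≤ f z := by
        intro z hz
        have hp'ball : p + (2:ℝ) • (z - ((2⁻¹ : ℝ) • q + (2⁻¹ : ℝ) • p)) ∈ ball p rb := by
          rw [mem_ball, dist_eq_norm, add_sub_cancel_left, norm_smul,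
            Real.norm_eq_abs]
          have hz' : ‖z - ((2⁻¹ : ℝ) • q + (2⁻¹ : ℝ) • p)‖ < rb / 2 := by
            rw [← dist_eq_norm]; exact hz
          rw [abs_of_pos (by norm_num : (0:ℝ) < 2)]
          linarith
        have hzeq : (2⁻¹ : ℝ) • q + (2⁻¹ : ℝ)
            • (p + (2:ℝ) • (z - ((2⁻¹ : ℝ) • q + (2⁻¹ : ℝ) • p))) = z := by
          rw [smul_add, smul_smul]
          norm_num
          abel
        calc f q ^ ((1:ℝ)/2) * δ ^ ((1:ℝ)/2)
            ≤ f q ^ ((1:ℝ)/2)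
              * f (p + (2:ℝ) • (z - ((2⁻¹ : ℝ) • q + (2⁻¹ : ℝ) • p))) ^ ((1:ℝ)/2) :=
              mul_le_mul_of_nonneg_left
                (Real.rpow_le_rpow hδpos.le (hballf _ hp'ball) (by norm_num))
                (Real.rpow_nonneg hfq.le _)
          _ ≤ f ((2⁻¹ : ℝ) • q + (2⁻¹ : ℝ)
              • (p + (2:ℝ) • (z - ((2⁻¹ : ℝ) • q + (2⁻¹ : ℝ) • p)))) := by
              have h12 : ((1:ℝ)/2) = (2⁻¹ : ℝ) := by norm_num
              rw [h12]
              exact hlc _ _ _ _ (by norm_num) (by norm_num) (by norm_num)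
          _ = f z := by rw [hzeq]
      have hwant : f q ^ ((1:ℝ)/2) * δ ^ ((1:ℝ)/2) * vB ≤ I := by
        have h1 : ∫ x in ball ((2⁻¹ : ℝ) • q + (2⁻¹ : ℝ) • p) (rb / 2), f x ≤ I :=
          setIntegral_le_integral hfi (Filter.Eventually.of_forall hf0)
        have h2 : f q ^ ((1:ℝ)/2) * δ ^ ((1:ℝ)/2)
            * (volume (ball ((2⁻¹ : ℝ) • q + (2⁻¹ : ℝ) • p) (rb / 2))).toReal
            ≤ ∫ x in ball ((2⁻¹ : ℝ) • q + (2⁻¹ : ℝ) • p) (rb / 2), f x :=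
          setIntegral_ge_of_const_le_real measurableSet_ball measure_ball_lt_top.ne hcq
            hfi.integrableOn
        rw [hvol_eq _, ← hvBdef] at h2
        linarith
      have hfq12 : f q ^ ((1:ℝ)/2) ≤ I / (δ ^ ((1:ℝ)/2) * vB) := by
        rw [le_div_iff₀ (by positivity)]
        calc f q ^ ((1:ℝ)/2) * (δ ^ ((1:ℝ)/2) * vB)
            = f q ^ ((1:ℝ)/2) * δ ^ ((1:ℝ)/2) * vB := by ring
          _ ≤ I := hwant
      have hfq_eq : f q = (f q ^ ((1:ℝ)/2)) ^ (2:ℕ) := by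
        rw [← Real.rpow_natCast (f q ^ ((1:ℝ)/2)) 2, ← Real.rpow_mul hfq.le,
          show ((1:ℝ)/2) * ((2:ℕ):ℝ) = 1 by norm_num, Real.rpow_one]
      have hKble : f q ≤ Kb := by
        rw [hfq_eq, hKbdef]
        exact pow_le_pow_left₀ (Real.rpow_nonneg hfq.le _) hfq12 2
      exact le_trans hKble (le_max_right _ _)
    -- eLpNorm facts
    have htop : eLpNorm f ⊤ volume ≠ ⊤ := by
      have hb : eLpNorm f ⊤ volume ≤ ENNReal.ofReal (max δ Kb) := by
        rw [eLpNorm_exponent_top]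
        exact eLpNormEssSup_le_of_ae_bound (C := max δ Kb)
          (Filter.Eventually.of_forall fun x => by
            rw [Real.norm_eq_abs, abs_of_nonneg (hf0 x)]; exact hbound x)
      exact ne_of_lt (lt_of_le_of_lt hb ENNReal.ofReal_lt_top)
    have hne0 : eLpNorm f ⊤ volume ≠ 0 := by
      intro h
      exact hne ((eLpNorm_eq_zero_iff hfm.aestronglyMeasurable (by norm_num)).1 h)
    have hMpos : 0 < supNorm n f := by
      rw [hMeq]
      exact ENNReal.toReal_pos hne0 htop
    -- superlevel sets are nonempty below M
    have hCr_ne : ∀ r : ℝ, 0 < r → r < supNorm n f → {x : Euc n | r ≤ f x}.Nonempty := by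
      intro r hr hrM
      by_contra h
      rw [Set.not_nonempty_iff_eq_empty] at h
      have hlt : ∀ x : Euc n, f x < r := by
        intro x
        by_contra hx
        push_neg at hx
        exact (Set.eq_empty_iff_forall_notMem.1 h x) hx
      have hle : eLpNorm f ⊤ volume ≤ ENNReal.ofReal r := by
        rw [eLpNorm_exponent_top]
        exact eLpNormEssSup_le_of_ae_bound (Filter.Eventually.of_forall fun x => by
          rw [Real.norm_eq_abs, abs_of_nonneg (hf0 x)]; exact (hlt x).le)
      have hM_le : supNorm n f ≤ r := by
        rw [hMeq]
        calc (eLpNorm f ⊤ volume).toReal ≤ (ENNReal.ofReal r).toReal :=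
              ENNReal.toReal_mono ENNReal.ofReal_ne_top hle
          _ = r := ENNReal.toReal_ofReal hr.le
      linarith
    -- sub-level radial sets
    have hsub_bdd : ∀ r : ℝ, 0 < r →
        BddAbove {t : ℝ | 0 ≤ t ∧ t • u ∈ {x : Euc n | r ≤ f x} - {x : Euc n | r ≤ f x}} := by
      intro r hr
      refine ⟨2 * R, fun t ht => hbddval {x : Euc n | r ≤ f x} (fun x hx => ?_) t ht.1 ht.2⟩
      simp only [hCdef, Function.mem_support]
      exact ne_of_gt (lt_of_lt_of_le hr hx)
    have hrad_le : ∀ r ∈ Set.Ioo (0:ℝ) (supNorm n f),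
        radialFn n ({x : Euc n | r ≤ f x} - {x : Euc n | r ≤ f x}) u ≤ ρ := by
      intro r hr
      refine csSup_le ?_ fun t ht => ?_
      · obtain ⟨x0, hx0⟩ := hCr_ne r hr.1 hr.2
        exact ⟨0, le_refl 0, by
          rw [zero_smul, ← sub_self x0]
          exact Set.sub_mem_sub hx0 hx0⟩
      · refine le_csSup hSbdd ⟨ht.1, ?_⟩
        obtain ⟨x, hx, y, hy, hxy⟩ := ht.2
        have hx' : x ∈ C := by
          simp only [hCdef, Function.mem_support]
          exact ne_of_gt (lt_of_lt_of_le hr.1 hx)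
        have hy' : y ∈ C := by
          simp only [hCdef, Function.mem_support]
          exact ne_of_gt (lt_of_lt_of_le hr.1 hy)
        rw [← hxy]
        exact Set.sub_mem_sub hx' hy'
    have himg_ne : ((fun r => radialFn n ({x | r ≤ f x} - {x | r ≤ f x}) u) ''
        Set.Ioo 0 (supNorm n f)).Nonempty :=
      ⟨_, Set.mem_image_of_mem _ (⟨half_pos hMpos, half_lt_self hMpos⟩ :
        supNorm n f / 2 ∈ Set.Ioo 0 (supNorm n f))⟩
    have himg_bdd : BddAbove ((fun r => radialFn n ({x | r ≤ f x} - {x | r ≤ f x}) u) ''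
        Set.Ioo 0 (supNorm n f)) := by
      refine ⟨ρ, ?_⟩
      rintro v ⟨r, hr, rfl⟩
      exact hrad_le r hr
    have h1 : sSup ((fun r => radialFn n ({x | r ≤ f x} - {x | r ≤ f x}) u) ''
        Set.Ioo 0 (supNorm n f)) ≤ ρ :=
      csSup_le himg_ne (by rintro v ⟨r, hr, rfl⟩; exact hrad_le r hr)
    have h2 : ρ ≤ sSup ((fun r => radialFn n ({x | r ≤ f x} - {x | r ≤ f x}) u) ''
        Set.Ioo 0 (supNorm n f)) := by
      rw [hρS]
      refine csSup_le hSne fun t ht => ?_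
      obtain ⟨htnn, htu⟩ := ht
      obtain ⟨x, hx, y, hy, hxy⟩ := htu
      have hfx : 0 < f x := hfpos x hx
      have hfy : 0 < f y := hfpos y hy
      have hr'pos : 0 < min (min (f x) (f y)) (supNorm n f / 2) :=
        lt_min (lt_min hfx hfy) (half_pos hMpos)
      have hr'M : min (min (f x) (f y)) (supNorm n f / 2) < supNorm n f :=
        lt_of_le_of_lt (min_le_right _ _) (half_lt_self hMpos)
      have htmem : t ∈ {t : ℝ | 0 ≤ t ∧ t • u ∈
          {z : Euc n | min (min (f x) (f y)) (supNorm n f / 2) ≤ f z} -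
          {z : Euc n | min (min (f x) (f y)) (supNorm n f / 2) ≤ f z}} := by
        refine ⟨htnn, ?_⟩
        rw [← hxy]
        have hxm : x ∈ {z : Euc n | min (min (f x) (f y)) (supNorm n f / 2) ≤ f z} := by
          simp only [Set.mem_setOf_eq]
          exact le_trans (min_le_left _ _) (min_le_left _ _)
        have hym : y ∈ {z : Euc n | min (min (f x) (f y)) (supNorm n f / 2) ≤ f z} := by
          simp only [Set.mem_setOf_eq]
          exact le_trans (min_le_left _ _) (min_le_right _ _)
        exact Set.sub_mem_sub hxm hym
      refine le_trans (le_csSup (hsub_bdd _ hr'pos) htmem)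
        (le_csSup himg_bdd (Set.mem_image_of_mem _ ⟨hr'pos, hr'M⟩))
    exact le_antisymm h2 h1
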